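/- arXiv:1111.5554 — 2 statements merged into one kernel-verified Lean document; each statement's English description precedes it below -/
import Mathlib

section
/- Let f : I → I be continuous with finitely many turning points, and let h_n : [0,1] → [0,1] be a sequence of orientation-preserving homeomorphisms with h_n(0)=0, h_n(1)=1, such that there exist λ_n → 1 with (h_n(z)-h_n(y))/(h_n(y)-h_n(x)) · (y-x)/(z-y) ≤ λ_n and ≥ λ_n⁻¹ for all 0 ≤ x < y < z ≤ 1. Then h_n converges uniformly to the identity map on [0,1]. -/
/-! Only the triples `(0, y, 1)` are needed. Since `h_n` fixes `0` and `1`, its ratio distortion on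
`(0, y, 1)` is the odds ratio `o(y) / o(h_n y)`, where `o(p) = p / (1 - p)`. Positivity of this
ratio already forces `0 < h_n y < 1`, and an odds ratio within a factor `λ` of `1` moves the
point by at most `λ - 1`. -/

open Set Filter Topology

noncomputable def ratioDistortion (f : ℝ → ℝ) (x y z : ℝ) : ℝ :=
  (f z - f y) / (f y - f x) * ((y - x) / (z - y))

lemma ratioDistortion_zero_one {f : ℝ → ℝ} (h0 : f 0 = 0) (h1 : f 1 = 1) (y : ℝ) :
    ratioDistortion f 0 y 1 = (1 - f y) / f y * (y / (1 - y)) := by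
  simp [ratioDistortion, h0, h1]

lemma abs_sub_le_of_oddsRatio_mem_Icc {y t L : ℝ} (hy0 : 0 < y) (hy1 : y < 1) (hL : 0 < L)
    (hlow : L⁻¹ ≤ (1 - t) / t * (y / (1 - y))) (hup : (1 - t) / t * (y / (1 - y)) ≤ L) :
    |t - y| ≤ L - 1 := by
  have hodds_y : 0 < y / (1 - y) := div_pos hy0 (by linarith)
  have hodds_t : 0 < (1 - t) / t :=
    pos_of_mul_pos_left ((inv_pos.mpr hL).trans_le hlow) hodds_y.le
  obtain ⟨ht0, ht1⟩ : 0 < t ∧ t < 1 := by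
    rcases div_pos_iff.mp hodds_t with ⟨h1t, ht⟩ | ⟨h1t, ht⟩
    · exact ⟨ht, by linarith⟩
    · linarith
  have hden : 0 < t * (1 - y) := mul_pos ht0 (by linarith)
  have hnum : 0 < (1 - t) * y := mul_pos (by linarith) hy0
  rw [div_mul_div_comm] at hlow hup
  have hupper : (1 - t) * y ≤ L * (t * (1 - y)) := (div_le_iff₀ hden).mp hup
  have hlower : t * (1 - y) ≤ L * ((1 - t) * y) :=
    (inv_mul_le_iff₀ hL).mp ((le_div_iff₀ hden).mp hlow)
  have hL1 : 1 ≤ L := by nlinarith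
  rw [abs_le]
  constructor <;> nlinarith [mul_pos ht0 hy0, mul_pos (sub_pos.2 ht1) (sub_pos.2 hy1)]

lemma dist_le_of_ratioDistortion_zero_one {f : ℝ → ℝ} (h0 : f 0 = 0) (h1 : f 1 = 1)
    {L : ℝ} (hL : 0 < L)
    (hbar : ∀ y, 0 < y → y < 1 →
      L⁻¹ ≤ ratioDistortion f 0 y 1 ∧ ratioDistortion f 0 y 1 ≤ L)
    {y : ℝ} (hy : y ∈ Icc 0 1) : dist y (f y) ≤ |L - 1| := by
  rcases hy.1.eq_or_lt with rfl | hy0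
  · simp [h0]
  rcases hy.2.eq_or_lt with rfl | hy1
  · simp [h1]
  obtain ⟨hlow, hup⟩ := hbar y hy0 hy1
  rw [ratioDistortion_zero_one h0 h1] at hlow hup
  rw [dist_comm, Real.dist_eq]
  exact (abs_sub_le_of_oddsRatio_mem_Icc hy0 hy1 hL hlow hup).trans (le_abs_self _)

lemma tendstoUniformlyOn_of_eventually_dist_le {ι α β : Type*} [PseudoMetricSpace β]
    {F : ι → α → β} {f : α → β} {p : Filter ι} {s : Set α} {b : ι → ℝ}
    (hb : Tendsto b p (𝓝 0)) (hF : ∀ᶠ n in p, ∀ x ∈ s, dist (f x) (F n x) ≤ b n) :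
    TendstoUniformlyOn F f p s := by
  rw [Metric.tendstoUniformlyOn_iff]
  intro ε hε
  filter_upwards [hF, hb.eventually (gt_mem_nhds hε)] with n hn hbn x hx
  exact (hn x hx).trans_lt hbn

theorem stmt10_general (h : ℕ → ℝ → ℝ)
    (h0 : ∀ n, h n 0 = 0) (h1 : ∀ n, h n 1 = 1)
    (lam : ℕ → ℝ) (hlam : Filter.Tendsto lam Filter.atTop (nhds 1))
    (hbar : ∀ n : ℕ, ∀ x y z : ℝ, 0 ≤ x → x < y → y < z → z ≤ 1 →
      (lam n)⁻¹ ≤ (h n z - h n y) / (h n y - h n x) * ((y - x) / (z - y)) ∧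
      (h n z - h n y) / (h n y - h n x) * ((y - x) / (z - y)) ≤ lam n) :
    TendstoUniformlyOn h id Filter.atTop (Set.Icc 0 1) := by
  have hdist : Tendsto (fun n => |lam n - 1|) atTop (𝓝 0) := by
    simpa using (hlam.sub_const 1).abs
  refine tendstoUniformlyOn_of_eventually_dist_le hdist ?_
  filter_upwards [hlam.eventually (lt_mem_nhds one_pos)] with n hn y hy
  exact dist_le_of_ratioDistortion_zero_one (h0 n) (h1 n) hn
    (fun y hy0 hy1 => hbar n 0 y 1 le_rfl hy0 hy1 le_rfl) hy

/-- A sequence of orientation-preserving homeomorphisms of `[0,1]` fixing the endpoints,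
whose ratio distortions tend uniformly to `1`, converges uniformly to the identity. -/
theorem stmt10 (h : ℕ → ℝ → ℝ)
    (hcont : ∀ n, ContinuousOn (h n) (Set.Icc 0 1))
    (hmono : ∀ n, StrictMonoOn (h n) (Set.Icc 0 1))
    (hmapsonto : ∀ n, h n '' Set.Icc 0 1 = Set.Icc 0 1)
    (h0 : ∀ n, h n 0 = 0) (h1 : ∀ n, h n 1 = 1)
    (lam : ℕ → ℝ) (hlam : Filter.Tendsto lam Filter.atTop (nhds 1))
    (hbar : ∀ n : ℕ, ∀ x y z : ℝ, 0 ≤ x → x < y → y < z → z ≤ 1 →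
      (lam n)⁻¹ ≤ (h n z - h n y) / (h n y - h n x) * ((y - x) / (z - y)) ∧
      (h n z - h n y) / (h n y - h n x) * ((y - x) / (z - y)) ≤ lam n) :
    TendstoUniformlyOn h id Filter.atTop (Set.Icc 0 1) :=
  stmt10_general h h0 h1 lam hlam hbar
end

section
/- Let f : I → I be continuous, where a nice set is a union of finitely many disjoint open intervals J with f^k(∂J) ∩ J = ∅ for all k ≥ 0, and let J₀, J₁ be nice sets satisfying J₀ ⊆ J₁. If T is an interval with ∂T ⊆ ∂J₀, then for every k ≥ 0, f^k(∂T) ∩ J₀ = ∅; consequently, if ℓ ≥ 0 is the smallest integer with f^ℓ(T) ∩ J₀ ≠ ∅ and f^ℓ|_T is injective, then f^ℓ(T) contains an entire connected component J₀(c) of J₀. -/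
/-- If `T` is an interval whose endpoints lie in the boundary of a nice set `J₀`, then
the orbit of `∂T` never meets `J₀`; consequently at the first time `ℓ` that `f^ℓ(T)`
meets `J₀` (with `f^ℓ` injective on `T`), the image `f^ℓ(T)` contains an entire
connected component of `J₀`. -/
theorem stmt13 (f : ℝ → ℝ) (hf : Continuous f)
    (J0 J1 : Set ℝ) (hJ0 : IsOpen J0) (hJ1 : IsOpen J1) (hsub : J0 ⊆ J1)
    (hnice0 : ∀ k : ℕ, (f^[k] '' frontier J0) ∩ J0 = ∅)
    (hnice1 : ∀ k : ℕ, (f^[k] '' frontier J1) ∩ J1 = ∅)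
    (t₁ t₂ : ℝ) (ht : t₁ < t₂)
    (hT : ({t₁, t₂} : Set ℝ) ⊆ frontier J0) :
    (∀ k : ℕ, (f^[k] '' ({t₁, t₂} : Set ℝ)) ∩ J0 = ∅) ∧
    ∀ ℓ : ℕ, (f^[ℓ] '' Set.Icc t₁ t₂ ∩ J0).Nonempty →
      (∀ i : ℕ, i < ℓ → f^[i] '' Set.Icc t₁ t₂ ∩ J0 = ∅) →
      Set.InjOn (f^[ℓ]) (Set.Icc t₁ t₂) →
      ∃ c ∈ J0, connectedComponentIn J0 c ⊆ f^[ℓ] '' Set.Icc t₁ t₂ := by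
  have hpart1 : ∀ k : ℕ, (f^[k] '' ({t₁, t₂} : Set ℝ)) ∩ J0 = ∅ := by
    intro k
    apply Set.eq_empty_of_subset_empty
    calc f^[k] '' ({t₁, t₂} : Set ℝ) ∩ J0
        ⊆ f^[k] '' frontier J0 ∩ J0 :=
          Set.inter_subset_inter_left _ (Set.image_mono hT)
      _ = ∅ := hnice0 k
  refine ⟨hpart1, ?_⟩
  intro ℓ hne _ hinj
  obtain ⟨y, hyS, hyJ⟩ := hne
  set g := f^[ℓ] with hg
  have hgc : Continuous g := hf.iterate ℓ
  have he1 : g t₁ ∉ J0 := by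
    intro h
    have : g t₁ ∈ f^[ℓ] '' ({t₁, t₂} : Set ℝ) ∩ J0 :=
      ⟨Set.mem_image_of_mem _ (by simp), h⟩
    simp [hpart1 ℓ] at this
  have he2 : g t₂ ∉ J0 := by
    intro h
    have : g t₂ ∈ f^[ℓ] '' ({t₁, t₂} : Set ℝ) ∩ J0 :=
      ⟨Set.mem_image_of_mem _ (by simp), h⟩
    simp [hpart1 ℓ] at this
  -- the image is exactly uIcc (g t₁) (g t₂)
  have hsubI : Set.uIcc (g t₁) (g t₂) ⊆ g '' Set.Icc t₁ t₂ := by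
    have := intermediate_value_uIcc (f := g) (a := t₁) (b := t₂) hgc.continuousOn
    rwa [Set.uIcc_of_le ht.le] at this
  have hsupI : g '' Set.Icc t₁ t₂ ⊆ Set.uIcc (g t₁) (g t₂) := by
    rcases hgc.continuousOn.strictMonoOn_of_injOn_Icc' ht.le hinj with hm | hm
    · rintro z ⟨x, hx, rfl⟩
      rw [Set.uIcc_of_le (hm.monotoneOn (Set.left_mem_Icc.2 ht.le)
        (Set.right_mem_Icc.2 ht.le) ht.le)]
      exact ⟨hm.monotoneOn (Set.left_mem_Icc.2 ht.le) hx hx.1,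
        hm.monotoneOn hx (Set.right_mem_Icc.2 ht.le) hx.2⟩
    · rintro z ⟨x, hx, rfl⟩
      rw [Set.uIcc_of_ge (hm.antitoneOn (Set.left_mem_Icc.2 ht.le)
        (Set.right_mem_Icc.2 ht.le) ht.le)]
      exact ⟨hm.antitoneOn hx (Set.right_mem_Icc.2 ht.le) hx.2,
        hm.antitoneOn (Set.left_mem_Icc.2 ht.le) hx hx.1⟩
  refine ⟨y, hyJ, ?_⟩
  set a := min (g t₁) (g t₂)
  set b := max (g t₁) (g t₂)
  have ha : a ∉ J0 := by rcases min_choice (g t₁) (g t₂) with h | h <;> rw [show a = _ from h] <;> assumption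
  have hb : b ∉ J0 := by rcases max_choice (g t₁) (g t₂) with h | h <;> rw [show b = _ from h] <;> assumption
  have hyI : y ∈ Set.Icc a b := by
    have := hsupI hyS
    rwa [Set.uIcc] at this
  have hC : connectedComponentIn J0 y ⊆ J0 := connectedComponentIn_subset _ _
  have hCord : (connectedComponentIn J0 y).OrdConnected :=
    (isPreconnected_connectedComponentIn).ordConnected
  have hyC : y ∈ connectedComponentIn J0 y := mem_connectedComponentIn hyJ
  intro z hz
  apply hsubI
  rw [Set.uIcc]
  constructor
  · by_contra h
    push_neg at h
    exact ha (hC (hCord.out hz hyC ⟨h.le, hyI.1⟩))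
  · by_contra h
    push_neg at h
    exact hb (hC (hCord.out hyC hz ⟨hyI.2, h.le⟩))
end
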